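/- Let A and H be finite groups, let H0 and G be subgroups of H, and set G0 = G ∩ H0. Assume H0 (and hence G0) acts on A on the right, and assume there exists a homomorphism i : G0 → A ⋊ G0 ≤ A ⋊ H0 splitting the projection A ⋊ G0 → G0. Then there exists an injective homomorphism j : G → A wr_{H0} H such that α(j(g)) = g for all g ∈ G (where α : A wr_{H0} H → H is the projection), j(G0) ⊆ Ind_{H0}^H(A) ⋊ H0, and π(j(σ)) = i(σ) for every σ ∈ G0, where π : Ind_{H0}^H(A) ⋊ H0 → A ⋊ H0 is the Shapiro map. -/

import Mathlib

/-! Choose representatives `s q` of the cosets `q ∈ H ⧸ H0`, with `s H0 = 1` and `s q ∈ G` whenever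
`q` meets `G`. Then `e(g, q) = (s q)⁻¹ g s(g⁻¹ q)` is an `H0`-valued cocycle which lies in
`G0 = G ⊓ H0` on the `G`-orbit of the trivial coset, and the left component `c` of `i` is a
crossed homomorphism `G0 → A`. Setting `j(g) = (f_g, g)` with `f_g(s(q) h) = c(e(g, q))^h` on
that orbit and `f_g = 1` off it, the crossed homomorphism property of `c` and the cocycle identity
for `e` make `j` a homomorphism, and `f_σ(1) = c(e(σ, H0)) = c(σ)` for `σ ∈ G0` is the
compatibility with the Shapiro map. -/

open MulOpposite

open scoped Classical

variable {G : Type*} [Group G] (G0 : Subgroup G) {A : Type*} [Group A]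
  (act : G0ᵐᵒᵖ →* MulAut A)

def TwInd : Subgroup (G → A) where
  carrier := {f | ∀ (σ : G) (ρ : G0), f (σ * ρ) = act (op ρ) (f σ)}
  one_mem' := by intro σ ρ; simp
  mul_mem' := by
    intro f g hf hg σ ρ
    simp only [Pi.mul_apply, hf σ ρ, hg σ ρ, map_mul]
  inv_mem' := by
    intro f hf σ ρ
    simp only [Pi.inv_apply, hf σ ρ, map_inv]

def twAct : G →* MulAut (TwInd G0 act) where
  toFun σ :=
    { toFun := fun f => ⟨fun τ => (f : G → A) (σ⁻¹ * τ), by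
        intro τ ρ
        simpa [mul_assoc] using f.2 (σ⁻¹ * τ) ρ⟩
      invFun := fun f => ⟨fun τ => (f : G → A) (σ * τ), by
        intro τ ρ
        simpa [mul_assoc] using f.2 (σ * τ) ρ⟩
      left_inv := by
        intro f; ext τ; simp [mul_assoc]
      right_inv := by
        intro f; ext τ; simp [mul_assoc]
      map_mul' := by
        intro f g; ext τ; rfl }
  map_one' := by ext f τ; simp
  map_mul' := by intro σ σ'; ext f τ; simp [mul_assoc]

/-- The anti-homomorphism `x ↦ op x⁻¹`, as a homomorphism `H →* Hᵐᵒᵖ`. -/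
def invOpHom (H : Type*) [Group H] : H →* Hᵐᵒᵖ where
  toFun x := op x⁻¹
  map_one' := by simp
  map_mul' x y := by show op (x * y)⁻¹ = op x⁻¹ * op y⁻¹; rw [mul_inv_rev, op_mul]

/-- The left action of `G0` on `A` corresponding to the given right action `act`;
the semidirect product `A ⋊ G0` is `A ⋊[baseAct G0 act] G0`. -/
def baseAct : G0 →* MulAut A := act.comp (invOpHom G0)

/-- The Shapiro map `Ind_{G0}^G(A) ⋊ G0 → A ⋊ G0`, `fσ ↦ f(1)σ`, defined on the
subgroup `Ind_{G0}^G(A) ⋊ G0 = rightHom⁻¹(G0)` of the twisted wreath product. -/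
def shapiro :
    (Subgroup.comap (SemidirectProduct.rightHom :
        (TwInd G0 act ⋊[twAct G0 act] G) →* G) G0) →* A ⋊[baseAct G0 act] G0 :=
  MonoidHom.mk'
    (fun x => ⟨((x : TwInd G0 act ⋊[twAct G0 act] G).left : G → A) 1,
      ⟨SemidirectProduct.rightHom (x : TwInd G0 act ⋊[twAct G0 act] G), x.2⟩⟩)
    (by
      intro x y
      set xe := (x : TwInd G0 act ⋊[twAct G0 act] G)
      set ye := (y : TwInd G0 act ⋊[twAct G0 act] G)
      have hcoe : ((x * y : _) : TwInd G0 act ⋊[twAct G0 act] G) = xe * ye := rfl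
      apply SemidirectProduct.ext
      · show ((xe * ye).left : G → A) 1 = _
        rw [SemidirectProduct.mul_left]
        have h1 : ((xe.left * (twAct G0 act) xe.right ye.left : TwInd G0 act) : G → A) 1 =
            (xe.left : G → A) 1 * (ye.left : G → A) (xe.right⁻¹ * 1) := rfl
        rw [h1, mul_one]
        have h2 : (ye.left : G → A) (xe.right⁻¹) =
            act (op (⟨xe.right, x.2⟩ : G0)⁻¹) ((ye.left : G → A) 1) := by
          have := ye.left.2 1 (⟨xe.right, x.2⟩ : G0)⁻¹
          simpa using this
        rw [h2]
        rfl
      · rfl)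


def IsCrossedHom {L N : Type*} [Group L] [Group N] (φ : L →* MulAut N) (c : L → N) : Prop :=
  ∀ a b, c (a * b) = c a * φ a (c b)

theorem SemidirectProduct.isCrossedHom_left_of_rightHom_comp {L N Q : Type*} [Group L]
    [Group N] [Group Q] {φ : Q →* MulAut N} (i : L →* N ⋊[φ] Q) {f : L →* Q}
    (hi : SemidirectProduct.rightHom.comp i = f) : IsCrossedHom (φ.comp f) fun a => (i a).left := by
  intro a b
  rw [← hi]
  dsimp only [MonoidHom.comp_apply]
  rw [map_mul, SemidirectProduct.mul_left, SemidirectProduct.rightHom_eq_right]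

theorem smul_mem_image_mk {K : Subgroup G} {g : G} (hg : g ∈ K) {q : G ⧸ G0}
    (hq : q ∈ QuotientGroup.mk '' (K : Set G)) : g • q ∈ QuotientGroup.mk '' (K : Set G) := by
  obtain ⟨k, hk, rfl⟩ := hq
  exact ⟨g * k, K.mul_mem hg hk, rfl⟩

theorem smul_mem_image_mk_iff {K : Subgroup G} {g : G} (hg : g ∈ K) {q : G ⧸ G0} :
    g • q ∈ QuotientGroup.mk '' (K : Set G) ↔ q ∈ QuotientGroup.mk '' (K : Set G) :=
  ⟨fun h => by simpa using smul_mem_image_mk G0 (K.inv_mem hg) h, smul_mem_image_mk G0 hg⟩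

structure CosetSection (K : Subgroup G) where
  toFun : G ⧸ G0 → G
  mk_toFun : ∀ q, (toFun q : G ⧸ G0) = q
  toFun_one : toFun ((1 : G) : G ⧸ G0) = 1
  toFun_mem : ∀ k ∈ K, toFun (k : G ⧸ G0) ∈ K

namespace CosetSection

variable {G0} {K : Subgroup G}

instance : CoeFun (CosetSection G0 K) (fun _ => G ⧸ G0 → G) := ⟨CosetSection.toFun⟩

theorem nonempty (K : Subgroup G) : Nonempty (CosetSection G0 K) := by
  let s₀ : G ⧸ G0 → G := fun q =>
    if h : ∃ k ∈ K, (k : G ⧸ G0) = q then h.choose else q.out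
  have mk_s₀ (q : G ⧸ G0) : (s₀ q : G ⧸ G0) = q := by
    by_cases h : ∃ k ∈ K, (k : G ⧸ G0) = q
    · simp only [s₀, dif_pos h]; exact h.choose_spec.2
    · simp only [s₀, dif_neg h]; exact q.out_eq'
  refine ⟨⟨Function.update s₀ ((1 : G) : G ⧸ G0) 1, fun q => ?_, Function.update_self _ _ _,
    fun k hk => ?_⟩⟩
  · by_cases hq : q = ((1 : G) : G ⧸ G0)
    · subst hq; simp
    · rw [Function.update_of_ne hq, mk_s₀]
  · by_cases hq : (k : G ⧸ G0) = ((1 : G) : G ⧸ G0)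
    · rw [hq, Function.update_self]; exact K.one_mem
    · have h : ∃ k' ∈ K, (k' : G ⧸ G0) = k := ⟨k, hk, rfl⟩
      rw [Function.update_of_ne hq]
      simp only [s₀, dif_pos h]
      exact h.choose_spec.1

variable (s : CosetSection G0 K)

def offset (τ : G) : G0 := ⟨(s τ)⁻¹ * τ, QuotientGroup.eq.mp (s.mk_toFun τ)⟩

theorem offset_mul (τ : G) (ρ : G0) : s.offset (τ * ρ) = s.offset τ * ρ := by
  ext
  simp only [offset, Subgroup.coe_mul, QuotientGroup.mk_mul_of_mem τ ρ.2, mul_assoc]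

def cocycle (g : G) (q : G ⧸ G0) : G0 :=
  ⟨(s q)⁻¹ * g * s (g⁻¹ • q), by
    rw [mul_assoc, ← QuotientGroup.eq, ← smul_eq_mul, ← MulAction.Quotient.smul_mk, s.mk_toFun,
      s.mk_toFun, smul_inv_smul]⟩

theorem cocycle_mul (g g' : G) (q : G ⧸ G0) :
    s.cocycle (g * g') q = s.cocycle g q * s.cocycle g' (g⁻¹ • q) := by
  ext
  simp only [cocycle, Subgroup.coe_mul, mul_inv_rev, mul_smul]
  group

theorem offset_inv_mul (g τ : G) : s.offset (g⁻¹ * τ) = (s.cocycle g τ)⁻¹ * s.offset τ := by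
  have hmk : ((g⁻¹ * τ : G) : G ⧸ G0) = g⁻¹ • (τ : G ⧸ G0) := rfl
  ext
  simp only [offset, cocycle, Subgroup.coe_mul, InvMemClass.coe_inv, hmk]
  group

theorem cocycle_mem {g : G} (hg : g ∈ K) {q : G ⧸ G0}
    (hq : q ∈ QuotientGroup.mk '' (K : Set G)) : (s.cocycle g q : G) ∈ K := by
  obtain ⟨k, hk, rfl⟩ := hq
  refine K.mul_mem (K.mul_mem (K.inv_mem (s.toFun_mem k hk)) hg) ?_
  exact s.toFun_mem _ (K.mul_mem (K.inv_mem hg) hk)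

theorem cocycle_one_of_mem {σ : G} (hσ : σ ∈ G0) : (s.cocycle σ (1 : G) : G) = σ := by
  have hmk : σ⁻¹ • ((1 : G) : G ⧸ G0) = (1 : G) :=
    QuotientGroup.eq.mpr (by simpa using G0.inv_mem hσ)
  simp only [cocycle, hmk, s.toFun_one, inv_one, one_mul, mul_one]

def cocycleInf (g : K) {q : G ⧸ G0} (hq : q ∈ QuotientGroup.mk '' (K : Set G)) : ↥(K ⊓ G0) :=
  ⟨s.cocycle g q, Subgroup.mem_inf.mpr ⟨s.cocycle_mem g.2 hq, (s.cocycle g q).2⟩⟩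

theorem cocycleInf_mul (g g' : K) {q : G ⧸ G0} (hq : q ∈ QuotientGroup.mk '' (K : Set G))
    (hq' : (g : G)⁻¹ • q ∈ QuotientGroup.mk '' (K : Set G)) :
    s.cocycleInf (g * g') hq = s.cocycleInf g hq * s.cocycleInf g' hq' := by
  have h := congrArg Subtype.val (s.cocycle_mul g g' q)
  exact Subtype.ext h

section Lift

variable (c : ↥(K ⊓ G0) → A)

noncomputable def repValue (g : K) (q : G ⧸ G0) : A :=
  if hq : q ∈ QuotientGroup.mk '' (K : Set G) then c (s.cocycleInf g hq) else 1

theorem repValue_mul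
    (hc : IsCrossedHom ((baseAct G0 act).comp (Subgroup.inclusion inf_le_right)) c)
    (g g' : K) (q : G ⧸ G0) :
    s.repValue c (g * g') q =
      s.repValue c g q * baseAct G0 act (s.cocycle g q) (s.repValue c g' ((g : G)⁻¹ • q)) := by
  by_cases hq : q ∈ QuotientGroup.mk '' (K : Set G)
  · have hq' := (smul_mem_image_mk_iff G0 (K.inv_mem g.2)).mpr hq
    simp only [repValue, dif_pos hq, dif_pos hq']
    rw [s.cocycleInf_mul g g' hq hq', hc]
    rfl
  · have hq' := (smul_mem_image_mk_iff G0 (K.inv_mem g.2)).not.mpr hq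
    simp only [repValue, dif_neg hq, dif_neg hq', map_one, mul_one]

noncomputable def liftFun (g : K) (τ : G) : A := act (op (s.offset τ)) (s.repValue c g τ)

theorem liftFun_mul_right (g : K) (τ : G) (ρ : G0) :
    s.liftFun act c g (τ * ρ) = act (op ρ) (s.liftFun act c g τ) := by
  rw [liftFun, liftFun, s.offset_mul, QuotientGroup.mk_mul_of_mem τ ρ.2, op_mul, map_mul,
    MulAut.mul_apply]

theorem liftFun_mul
    (hc : IsCrossedHom ((baseAct G0 act).comp (Subgroup.inclusion inf_le_right)) c)
    (g g' : K) (τ : G) :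
    s.liftFun act c (g * g') τ = s.liftFun act c g τ * s.liftFun act c g' ((g : G)⁻¹ * τ) := by
  rw [liftFun, s.repValue_mul act c hc, map_mul, liftFun, liftFun, s.offset_inv_mul, op_mul,
    map_mul, MulAut.mul_apply]
  rfl

theorem liftFun_one (σ : ↥(K ⊓ G0)) :
    s.liftFun act c (Subgroup.inclusion inf_le_left σ) 1 = c σ := by
  have hoffset : s.offset 1 = 1 := Subtype.ext (by simp [offset, s.toFun_one])
  have h1 : ((1 : G) : G ⧸ G0) ∈ QuotientGroup.mk '' (K : Set G) := ⟨1, K.one_mem, rfl⟩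
  simp only [liftFun, hoffset, op_one, map_one, MulAut.one_apply, repValue, dif_pos h1]
  exact congrArg c (Subtype.ext (s.cocycle_one_of_mem σ.2.2))

noncomputable def lift
    (hc : IsCrossedHom ((baseAct G0 act).comp (Subgroup.inclusion inf_le_right)) c) :
    K →* TwInd G0 act ⋊[twAct G0 act] G :=
  MonoidHom.mk' (fun g => ⟨⟨s.liftFun act c g, s.liftFun_mul_right act c g⟩, g⟩) fun g g' =>
    SemidirectProduct.ext (Subtype.ext (funext (s.liftFun_mul act c hc g g'))) rfl

end Lift

end CosetSection

theorem exists_embedding_twistedWreath_compatible_with_shapiro_general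
    {H : Type*} [Group H] {A' : Type*} [Group A']
    (H0 G' : Subgroup H) (act' : H0ᵐᵒᵖ →* MulAut A')
    (i : ↥(G' ⊓ H0) →* A' ⋊[baseAct H0 act'] ↥H0)
    (hi : SemidirectProduct.rightHom.comp i =
      Subgroup.inclusion (inf_le_right : G' ⊓ H0 ≤ H0)) :
    ∃ j : ↥G' →* TwInd H0 act' ⋊[twAct H0 act'] H,
      Function.Injective j ∧
      SemidirectProduct.rightHom.comp j = G'.subtype ∧
      ∀ σ : ↥(G' ⊓ H0),
        ∃ h : j (Subgroup.inclusion (inf_le_left : G' ⊓ H0 ≤ G') σ) ∈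
            Subgroup.comap (SemidirectProduct.rightHom :
              (TwInd H0 act' ⋊[twAct H0 act'] H) →* H) H0,
          shapiro H0 act' ⟨j (Subgroup.inclusion (inf_le_left : G' ⊓ H0 ≤ G') σ), h⟩ =
            i σ := by
  obtain ⟨s⟩ := CosetSection.nonempty (G0 := H0) G'
  let j := s.lift act' _ (SemidirectProduct.isCrossedHom_left_of_rightHom_comp i hi)
  refine ⟨j, fun g g' h => Subtype.ext (congrArg SemidirectProduct.right h), rfl,
    fun σ => ⟨σ.2.2, SemidirectProduct.ext (s.liftFun_one act' _ σ) ?_⟩⟩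
  exact Subtype.ext (congrArg Subtype.val (DFunLike.congr_fun hi σ)).symm

/-- let `A` and `H` be finite groups, `H0, G ≤ H`, `G0 = G ⊓ H0`, with `H0`
acting on `A` on the right. Any splitting `i : G0 → A ⋊ G0 ≤ A ⋊ H0` of the projection
`A ⋊ G0 → G0` lifts to an embedding `j : G → A wr_{H0} H` over the inclusion `G ≤ H`
with `j(G0) ⊆ Ind_{H0}^H(A) ⋊ H0` and `π ∘ j = i` on `G0`, where `π` is the Shapiro
map. -/
theorem exists_embedding_twistedWreath_compatible_with_shapiro
    {H : Type*} [Group H] [Finite H] {A' : Type*} [Group A'] [Finite A']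
    (H0 G' : Subgroup H) (act' : H0ᵐᵒᵖ →* MulAut A')
    (i : ↥(G' ⊓ H0) →* A' ⋊[baseAct H0 act'] ↥H0)
    (hi : SemidirectProduct.rightHom.comp i =
      Subgroup.inclusion (inf_le_right : G' ⊓ H0 ≤ H0)) :
    ∃ j : ↥G' →* TwInd H0 act' ⋊[twAct H0 act'] H,
      Function.Injective j ∧
      SemidirectProduct.rightHom.comp j = G'.subtype ∧
      ∀ σ : ↥(G' ⊓ H0),
        ∃ h : j (Subgroup.inclusion (inf_le_left : G' ⊓ H0 ≤ G') σ) ∈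
            Subgroup.comap (SemidirectProduct.rightHom :
              (TwInd H0 act' ⋊[twAct H0 act'] H) →* H) H0,
          shapiro H0 act' ⟨j (Subgroup.inclusion (inf_le_left : G' ⊓ H0 ≤ G') σ), h⟩ =
            i σ :=
  exists_embedding_twistedWreath_compatible_with_shapiro_general H0 G' act' i hi
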